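/- For n≥2, the homomorphism g: B(A_n) → B(Ã_n) sending σ_i ↦ σ_i for 1≤i≤n is a well-defined group homomorphism and is a section of the surjection f: B(Ã_n) → B(A_n) determined by σ_i ↦ σ_i and a_{n+1} ↦ σ_n^{-1}⋯σ_2^{-1}σ_1σ_2⋯σ_n; that is, f∘g = id on B(A_n), and in particular g is injective and B(Ã_n) is the internal semidirect product of ker f with the image of g. -/

import Mathlib

/-- Relators of the `A`-type braid group `B(A n)`: generator `i : Fin n` stands for `σ_{i+1}`. -/
def braidRelsA (n : ℕ) : Set (FreeGroup (Fin n)) :=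
  { r | (∃ i j : Fin n, (i : ℕ) + 2 ≤ (j : ℕ) ∧
          r = FreeGroup.of i * FreeGroup.of j * (FreeGroup.of j * FreeGroup.of i)⁻¹) ∨
        (∃ i j : Fin n, (j : ℕ) = (i : ℕ) + 1 ∧
          r = FreeGroup.of i * FreeGroup.of j * FreeGroup.of i *
              (FreeGroup.of j * FreeGroup.of i * FreeGroup.of j)⁻¹) }

/-- The `A`-type braid group `B(A_n)` with `n` generators `σ_1, …, σ_n`. -/
abbrev BraidA (n : ℕ) : Type := PresentedGroup (braidRelsA n)

/-- Relators of the affine braid group `B(Ã_n)`: generator `some i` (`i : Fin n`)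
stands for `σ_{i+1}`, and `none` stands for `a_{n+1}`. -/
def braidRelsAff (n : ℕ) : Set (FreeGroup (Option (Fin n))) :=
  { r | (∃ i j : Fin n, (i : ℕ) + 2 ≤ (j : ℕ) ∧
          r = FreeGroup.of (some i) * FreeGroup.of (some j) *
              (FreeGroup.of (some j) * FreeGroup.of (some i))⁻¹) ∨
        (∃ i j : Fin n, (j : ℕ) = (i : ℕ) + 1 ∧
          r = FreeGroup.of (some i) * FreeGroup.of (some j) * FreeGroup.of (some i) *
              (FreeGroup.of (some j) * FreeGroup.of (some i) * FreeGroup.of (some j))⁻¹) ∨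
        (∃ i : Fin n, 1 ≤ (i : ℕ) ∧ (i : ℕ) + 2 ≤ n ∧
          r = FreeGroup.of (some i) * FreeGroup.of none *
              (FreeGroup.of none * FreeGroup.of (some i))⁻¹) ∨
        (∃ i : Fin n, ((i : ℕ) = 0 ∨ (i : ℕ) + 1 = n) ∧
          r = FreeGroup.of (some i) * FreeGroup.of none * FreeGroup.of (some i) *
              (FreeGroup.of none * FreeGroup.of (some i) * FreeGroup.of none)⁻¹) }

/-- The affine (`Ã`-type) braid group `B(Ã_n)`, with generators `σ_1, …, σ_n` and `a_{n+1}`. -/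
abbrev BraidAff (n : ℕ) : Type := PresentedGroup (braidRelsAff n)

/-- `b = σ_n⁻¹ σ_{n-1}⁻¹ ⋯ σ_2⁻¹ σ_1 σ_2 ⋯ σ_{n-1} σ_n` in `B(A_n)`. -/
noncomputable def bA (n : ℕ) (h : 0 < n) : BraidA n :=
  ((((List.finRange n).drop 1).map fun i => (PresentedGroup.of i : BraidA n)).prod)⁻¹ *
    PresentedGroup.of (⟨0, h⟩ : Fin n) *
    (((List.finRange n).drop 1).map fun i => (PresentedGroup.of i : BraidA n)).prod

/-!
The section `g` exists because the relators of `B(A_n)` are among those of `B(Ã_n)`. For `f` one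
checks that `b = Q⁻¹ σ_1 Q`, `Q = σ_2 ⋯ σ_n`, satisfies the relations of `a_{n+1}`:
* `Q⁻¹ σ_{i+1} Q = σ_i` for `2 ≤ i ≤ n - 1`, so `σ_i b = Q⁻¹ σ_{i+1} σ_1 Q = b σ_i`;
* `b` is the conjugate by `σ_3 ⋯ σ_n`, which commutes with `σ_1`, of `σ_2⁻¹ σ_1 σ_2 = σ_1 σ_2 σ_1⁻¹`,
  so the pair `(σ_1, b)` is conjugate to the braiding pair `(σ_1, σ_2)`;
* `b = P σ_n P⁻¹` for `P = σ_1 ⋯ σ_{n-1}`, so conjugation by `δ = σ_1 ⋯ σ_n` carries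
  `(σ_n, b)` to `(b, σ_1)`, which braid by the previous item.
Then `f ∘ g = id` on generators, and the rest is formal for a split surjection.
-/

section BraidRel

variable {G H : Type*} [Group G] [Group H] {x y : G}

def BraidRel (x y : G) : Prop := x * y * x = y * x * y

theorem BraidRel.symm (h : BraidRel x y) : BraidRel y x := Eq.symm h

theorem BraidRel.map {F : Type*} [FunLike F G H] [MonoidHomClass F G H] (h : BraidRel x y)
    (f : F) : BraidRel (f x) (f y) := by
  simp only [BraidRel, ← map_mul]
  exact congrArg f h

theorem BraidRel.mul_mul_inv_eq (h : BraidRel x y) : x * y * x⁻¹ = y⁻¹ * x * y :=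
  calc x * y * x⁻¹ = y⁻¹ * (y * x * y) * x⁻¹ := by group
    _ = y⁻¹ * (x * y * x) * x⁻¹ := by rw [← h]
    _ = y⁻¹ * x * y := by group

theorem BraidRel.conj (h : BraidRel x y) : BraidRel x (y⁻¹ * x * y) := by
  simpa [← h.mul_mul_inv_eq] using h.map (MulAut.conj x)

end BraidRel

section Relators

variable {α G : Type*} [Group G]

open FreeGroup

theorem FreeGroup.lift_commRelator_eq_one_iff (f : α → G) (i j : α) :
    lift f (of i * of j * (of j * of i)⁻¹) = 1 ↔ Commute (f i) (f j) := by
  simp only [_root_.map_mul, _root_.map_inv, mul_inv_eq_one, lift_apply_of]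
  rfl

theorem FreeGroup.lift_braidRelator_eq_one_iff (f : α → G) (i j : α) :
    lift f (of i * of j * of i * (of j * of i * of j)⁻¹) = 1 ↔ BraidRel (f i) (f j) := by
  simp only [_root_.map_mul, _root_.map_inv, mul_inv_eq_one, lift_apply_of]
  rfl

theorem PresentedGroup.lift_of_eq_one {rels : Set (FreeGroup α)} {r : FreeGroup α}
    (h : r ∈ rels) : lift (PresentedGroup.of (rels := rels)) r = 1 := by
  rw [show lift PresentedGroup.of = PresentedGroup.mk rels from ext_hom _ _ fun _ ↦ by simp [PresentedGroup.of]]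
  exact PresentedGroup.one_of_mem h

end Relators

namespace BraidA

/-- `gen n k` is `σ_{k+1}` for `k < n`, and `1` otherwise. -/
noncomputable def gen (n k : ℕ) : BraidA n :=
  if h : k < n then PresentedGroup.of ⟨k, h⟩ else 1

/-- `genProd n a l = σ_{a+1} σ_{a+2} ⋯ σ_{a+l}`. -/
noncomputable def genProd (n a l : ℕ) : BraidA n :=
  ((List.range' a l).map (gen n)).prod

variable {n : ℕ}

theorem gen_val (i : Fin n) : gen n i = PresentedGroup.of i := by
  simp [gen]

theorem commute_gen {a b : ℕ} (h : a + 2 ≤ b) : Commute (gen n a) (gen n b) := by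
  by_cases hb : b < n
  · rw [gen, dif_pos (by omega : a < n), gen, dif_pos hb]
    exact (FreeGroup.lift_commRelator_eq_one_iff _ _ _).1
      (PresentedGroup.lift_of_eq_one (.inl ⟨⟨a, by omega⟩, ⟨b, hb⟩, h, rfl⟩))
  · simp [gen, hb]

theorem braidRel_gen {a : ℕ} (h : a + 2 ≤ n) : BraidRel (gen n a) (gen n (a + 1)) := by
  rw [gen, dif_pos (by omega : a < n), gen, dif_pos (by omega : a + 1 < n)]
  exact (FreeGroup.lift_braidRelator_eq_one_iff _ _ _).1
    (PresentedGroup.lift_of_eq_one (.inr ⟨⟨a, by omega⟩, ⟨a + 1, by omega⟩, rfl, rfl⟩))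

theorem genProd_succ (a l : ℕ) : genProd n a (l + 1) = gen n a * genProd n (a + 1) l := by
  simp [genProd, List.range'_succ]

theorem genProd_succ' (a l : ℕ) : genProd n a (l + 1) = genProd n a l * gen n (a + l) := by
  simp [genProd, List.range'_concat]

theorem commute_gen_genProd_of_add_two_le {a c l : ℕ} (h : c + 2 ≤ a) :
    Commute (gen n c) (genProd n a l) :=
  Commute.list_prod_right _ _ <| by
    simp only [List.mem_map, List.mem_range'_1]
    rintro _ ⟨k, hk, rfl⟩
    exact commute_gen (by omega)

theorem commute_gen_genProd_of_le {a c l : ℕ} (h : a + l + 1 ≤ c) :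
    Commute (gen n c) (genProd n a l) :=
  Commute.list_prod_right _ _ <| by
    simp only [List.mem_map, List.mem_range'_1]
    rintro _ ⟨k, hk, rfl⟩
    exact (commute_gen (by omega)).symm

theorem gen_succ_mul_genProd {a c l : ℕ} (hac : a ≤ c) (hcl : c + 2 ≤ a + l) (hln : a + l ≤ n) :
    gen n (c + 1) * genProd n a l = genProd n a l * gen n c := by
  induction l generalizing a with
  | zero => omega
  | succ l ih =>
    rcases hac.eq_or_lt with rfl | hlt
    · obtain ⟨l, rfl⟩ : ∃ l', l = l' + 1 := ⟨l - 1, by omega⟩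
      have hbraid : BraidRel (gen n a) (gen n (a + 1)) := braidRel_gen (by omega)
      have hcomm : Commute (gen n a) (genProd n (a + 2) l) :=
        commute_gen_genProd_of_add_two_le le_rfl
      calc gen n (a + 1) * genProd n a (l + 2)
          = gen n (a + 1) * gen n a * gen n (a + 1) * genProd n (a + 2) l := by
            simp only [genProd_succ, mul_assoc]
        _ = gen n a * gen n (a + 1) * (gen n a * genProd n (a + 2) l) := by
            rw [← hbraid, mul_assoc]
        _ = genProd n a (l + 2) * gen n a := by
            rw [hcomm.eq]
            simp only [genProd_succ, mul_assoc]
    · rw [genProd_succ, ← mul_assoc, ← (commute_gen (by omega : a + 2 ≤ c + 1)).eq, mul_assoc,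
        ih (by omega) (by omega) (by omega), mul_assoc]

theorem genProd_mul_gen_mul_inv {k : ℕ} (hk : k < n) :
    genProd n 0 k * gen n k * (genProd n 0 k)⁻¹ = (genProd n 1 k)⁻¹ * gen n 0 * genProd n 1 k := by
  induction k with
  | zero => simp [genProd]
  | succ k ih =>
    set P := genProd n 0 k
    set Q := genProd n 1 k
    have hc : Commute (gen n (k + 1)) P := commute_gen_genProd_of_le (by omega)
    rw [genProd_succ', genProd_succ', zero_add, add_comm 1 k]
    calc P * gen n k * gen n (k + 1) * (P * gen n k)⁻¹
        = P * (gen n k * gen n (k + 1) * (gen n k)⁻¹) * P⁻¹ := by group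
      _ = P * (gen n (k + 1))⁻¹ * gen n k * (gen n (k + 1) * P⁻¹) := by
          rw [(braidRel_gen (by omega)).mul_mul_inv_eq]
          group
      _ = (gen n (k + 1))⁻¹ * (P * gen n k * P⁻¹) * gen n (k + 1) := by
          rw [← hc.inv_left.eq, hc.inv_right.eq]
          group
      _ = (Q * gen n (k + 1))⁻¹ * gen n 0 * (Q * gen n (k + 1)) := by
          rw [ih (by omega)]
          group

/-- `b = Q⁻¹ σ_1 Q` with `Q = σ_2 ⋯ σ_n`; the image of `a_{n+1}`. -/
noncomputable def b (n : ℕ) : BraidA n :=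
  (genProd n 1 (n - 1))⁻¹ * gen n 0 * genProd n 1 (n - 1)

theorem bA_eq_b (h : 0 < n) : bA n h = b n := by
  have hQ : (((List.finRange n).drop 1).map fun i => (PresentedGroup.of i : BraidA n)).prod =
      genProd n 1 (n - 1) := by
    have hgen : (fun i : Fin n => (PresentedGroup.of i : BraidA n)) = gen n ∘ Fin.val :=
      funext fun i => (gen_val i).symm
    rw [hgen, ← List.map_map, List.map_drop, List.map_coe_finRange_eq_range,
      List.range_eq_range', List.drop_range', genProd]
  rw [bA, b, hQ, gen, dif_pos h]

theorem commute_gen_b {c : ℕ} (hc : 1 ≤ c) (hcn : c + 2 ≤ n) : Commute (gen n c) (b n) := by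
  rw [b]
  set Q := genProd n 1 (n - 1)
  have hshift : Q⁻¹ * gen n (c + 1) * Q = gen n c := by
    rw [mul_assoc, gen_succ_mul_genProd hc (by omega) (by omega), inv_mul_cancel_left]
  simpa [hshift] using ((commute_gen (by omega : 0 + 2 ≤ c + 1)).symm.map (MulAut.conj Q⁻¹))

theorem braidRel_gen_zero_b (hn : 2 ≤ n) : BraidRel (gen n 0) (b n) := by
  set T := genProd n 2 (n - 2)
  have hQ : genProd n 1 (n - 1) = gen n 1 * T := by
    rw [show n - 1 = n - 2 + 1 by omega, genProd_succ]
  have hT : T⁻¹ * gen n 0 * T = gen n 0 := by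
    rw [mul_assoc, (commute_gen_genProd_of_add_two_le (l := n - 2) le_rfl).eq, inv_mul_cancel_left]
  have := ((braidRel_gen (by omega : 0 + 2 ≤ n)).conj).map (MulAut.conj T⁻¹)
  simp only [MulAut.conj_apply, inv_inv, hT] at this
  convert this using 1
  rw [b, hQ]
  group

theorem braidRel_gen_last_b (hn : 2 ≤ n) : BraidRel (gen n (n - 1)) (b n) := by
  set P := genProd n 0 (n - 1)
  set Q := genProd n 1 (n - 1)
  set δ := genProd n 0 n
  have hδP : δ = P * gen n (n - 1) := by
    have := genProd_succ' (n := n) 0 (n - 1)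
    rwa [Nat.sub_add_cancel (by omega), zero_add] at this
  have hδQ : δ = gen n 0 * Q := by
    have := genProd_succ (n := n) 0 (n - 1)
    rwa [Nat.sub_add_cancel (by omega)] at this
  have hbP : b n = P * gen n (n - 1) * P⁻¹ := (genProd_mul_gen_mul_inv (by omega)).symm
  have hbQ : b n = Q⁻¹ * gen n 0 * Q := rfl
  have := (braidRel_gen_zero_b hn).symm.map (MulAut.conj δ⁻¹)
  simp only [MulAut.conj_apply, inv_inv] at this
  convert this using 1
  · rw [hbP, hδP]; group
  · rw [hbQ, hδQ]; group

noncomputable def toBraidAff (n : ℕ) : BraidA n →* BraidAff n :=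
  PresentedGroup.map (FreeGroup.map some) fun r hr => by
    rcases hr with ⟨i, j, hij, rfl⟩ | ⟨i, j, hij, rfl⟩
    · exact .inl ⟨i, j, hij, by simp⟩
    · exact .inr (.inl ⟨i, j, hij, by simp⟩)

theorem toBraidAff_of (i : Fin n) :
    toBraidAff n (PresentedGroup.of i) = PresentedGroup.of (some i) := rfl

end BraidA

namespace BraidAff

open BraidA

variable {n : ℕ}

noncomputable def genImage (n : ℕ) : Option (Fin n) → BraidA n :=
  fun o => o.elim (b n) fun i => gen n i

theorem lift_genImage_eq_one (hn : 2 ≤ n) :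
    ∀ r ∈ braidRelsAff n, FreeGroup.lift (genImage n) r = 1 := by
  rintro r (⟨i, j, hij, rfl⟩ | ⟨i, j, hij, rfl⟩ | ⟨i, hi, hin, rfl⟩ | ⟨i, hi | hi, rfl⟩)
  · exact (FreeGroup.lift_commRelator_eq_one_iff _ _ _).2 (commute_gen hij)
  · rw [FreeGroup.lift_braidRelator_eq_one_iff]
    show BraidRel (gen n i) (gen n j)
    rw [hij]
    exact braidRel_gen (by omega)
  · exact (FreeGroup.lift_commRelator_eq_one_iff _ _ _).2 (commute_gen_b hi hin)
  · rw [FreeGroup.lift_braidRelator_eq_one_iff]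
    show BraidRel (gen n i) (b n)
    rw [hi]
    exact braidRel_gen_zero_b hn
  · rw [FreeGroup.lift_braidRelator_eq_one_iff]
    show BraidRel (gen n i) (b n)
    rw [show (i : ℕ) = n - 1 by omega]
    exact braidRel_gen_last_b hn

noncomputable def toBraidA (hn : 2 ≤ n) : BraidAff n →* BraidA n :=
  PresentedGroup.toGroup (lift_genImage_eq_one hn)

theorem toBraidA_of_some (hn : 2 ≤ n) (i : Fin n) :
    toBraidA hn (PresentedGroup.of (some i)) = PresentedGroup.of i :=
  (PresentedGroup.toGroup.of _).trans (gen_val i)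

theorem toBraidA_of_none (hn : 2 ≤ n) : toBraidA hn (PresentedGroup.of none) = b n :=
  PresentedGroup.toGroup.of _

end BraidAff

namespace MonoidHom

variable {G H : Type*} [Group G] [Group H] {f : G →* H} {g : H →* G}

theorem ker_inf_range_eq_bot_of_leftInverse (hfg : Function.LeftInverse f g) :
    f.ker ⊓ g.range = ⊥ := by
  refine eq_bot_iff.2 fun x hx => ?_
  obtain ⟨hx, y, rfl⟩ := Subgroup.mem_inf.1 hx
  rw [mem_ker, hfg] at hx
  rw [hx, map_one]
  exact one_mem _

theorem ker_sup_range_eq_top_of_leftInverse (hfg : Function.LeftInverse f g) :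
    f.ker ⊔ g.range = ⊤ := by
  refine eq_top_iff.2 fun x _ => ?_
  have hker : x * (g (f x))⁻¹ ∈ f.ker := by
    rw [mem_ker, map_mul, map_inv, hfg, mul_inv_cancel]
  simpa using Subgroup.mul_mem_sup hker (mem_range.2 ⟨f x, rfl⟩ : g (f x) ∈ g.range)

end MonoidHom

theorem stmt_9 (n : ℕ) (hn : 2 ≤ n) :
    ∃ (f : BraidAff n →* BraidA n) (g : BraidA n →* BraidAff n),
      (∀ i : Fin n, f (PresentedGroup.of (some i)) = PresentedGroup.of i) ∧
      f (PresentedGroup.of none) = bA n (by omega) ∧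
      Function.Surjective f ∧
      (∀ i : Fin n, g (PresentedGroup.of i) = PresentedGroup.of (some i)) ∧
      f.comp g = MonoidHom.id (BraidA n) ∧
      Function.Injective g ∧
      f.ker ⊓ g.range = ⊥ ∧
      f.ker ⊔ g.range = ⊤ := by
  set f := BraidAff.toBraidA hn
  set g := BraidA.toBraidAff n
  have hfg : f.comp g = MonoidHom.id (BraidA n) :=
    PresentedGroup.ext fun i => BraidAff.toBraidA_of_some hn i
  have hinv : Function.LeftInverse f g := DFunLike.congr_fun hfg
  refine ⟨f, g, BraidAff.toBraidA_of_some hn, ?_, hinv.surjective, BraidA.toBraidAff_of, hfg,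
    hinv.injective, MonoidHom.ker_inf_range_eq_bot_of_leftInverse hinv,
    MonoidHom.ker_sup_range_eq_top_of_leftInverse hinv⟩
  rw [BraidAff.toBraidA_of_none, BraidA.bA_eq_b]
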